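/- Let X be uniform on the unit circle and let X̃ be uniform on the two points (±2/π, 0) (the distribution of the MMSE estimate under optimal 1-bit quantization). Then W₂²(p_X, p_{X̃}) = 1 − 4/π², i.e., the squared Wasserstein-2 distance equals the MMSE distortion. -/

import Mathlib

open MeasureTheory ProbabilityTheory Real

/-- Squared Wasserstein-2 distance: infimum over couplings of the expected squared distance. -/
noncomputable def W2sq {E : Type*} [MeasurableSpace E] [NormedAddCommGroup E]
    (p q : Measure E) : ℝ :=
  (⨅ γ : {γ : Measure (E × E) // γ.map Prod.fst = p ∧ γ.map Prod.snd = q},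
    ∫⁻ z, (‖z.1 - z.2‖₊ : ENNReal) ^ 2 ∂(γ.1)).toReal

/-- The point of the unit circle in `ℝ²` at angle `θ`. -/
noncomputable def pt (θ : ℝ) : EuclideanSpace ℝ (Fin 2) :=
  (WithLp.equiv 2 (Fin 2 → ℝ)).symm ![Real.cos θ, Real.sin θ]

/-- Uniform probability measure on the interval `[a, b)`. -/
noncomputable def unifIco (a b : ℝ) : Measure ℝ :=
  (ENNReal.ofReal (b - a))⁻¹ • volume.restrict (Set.Ico a b)

/-- Uniform distribution on the unit circle, as the pushforward of the uniform angle. -/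
noncomputable def circUnif : Measure (EuclideanSpace ℝ (Fin 2)) :=
  (unifIco 0 (2 * π)).map pt

open Metric
open scoped ENNReal RealInnerProductSpace

/-!
Any coupling of `p` with a measure carried by `S` costs at least `∫ d(x, S)² dp`, and a measurable
nearest-point map `T : E → S` attains this bound with the coupling `(id, T)₊p`. For `S = {a, -a}`
the nearest point of `x` is `a` or `-a` according to the sign of `⟪x, a⟫`, so for `a = (c, 0)`
this map splits the uniform measure on the circle into two halves, pushing it to the two-point
measure with equal weights. The optimal cost is the mean of `1 - 2|c||cos θ| + c²`, namely
`1 - 4|c|/π + c²`, which is `1 - 4/π²` at `c = 2/π`.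
-/

noncomputable def transportCost {E : Type*} [MeasurableSpace E] [NormedAddCommGroup E]
    (p q : Measure E) : ℝ≥0∞ :=
  ⨅ γ : {γ : Measure (E × E) // γ.map Prod.fst = p ∧ γ.map Prod.snd = q},
    ∫⁻ z, (‖z.1 - z.2‖₊ : ℝ≥0∞) ^ 2 ∂(γ.1)

lemma W2sq_eq_toReal_transportCost {E : Type*} [MeasurableSpace E] [NormedAddCommGroup E]
    (p q : Measure E) : W2sq p q = (transportCost p q).toReal :=
  rfl

lemma transportCost_le_of_coupling {E : Type*} [MeasurableSpace E] [NormedAddCommGroup E]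
    {p q : Measure E} {γ : Measure (E × E)} (h₁ : γ.map Prod.fst = p) (h₂ : γ.map Prod.snd = q) :
    transportCost p q ≤ ∫⁻ z, (‖z.1 - z.2‖₊ : ℝ≥0∞) ^ 2 ∂γ :=
  iInf_le (fun γ : {γ : Measure (E × E) // γ.map Prod.fst = p ∧ γ.map Prod.snd = q} =>
    ∫⁻ z, (‖z.1 - z.2‖₊ : ℝ≥0∞) ^ 2 ∂γ.1) ⟨γ, h₁, h₂⟩

section NearestPoint

variable {E : Type*} [MeasurableSpace E] [NormedAddCommGroup E] [OpensMeasurableSpace E]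
  {p q : Measure E} {S : Set E}

lemma lintegral_infEDist_sq_le_transportCost (hq : ∀ᵐ y ∂q, y ∈ S) :
    ∫⁻ x, infEDist x S ^ 2 ∂p ≤ transportCost p q := by
  refine le_iInf fun ⟨γ, hfst, hsnd⟩ => ?_
  subst hfst hsnd
  have hS : ∀ᵐ z ∂γ, z.2 ∈ S := ae_of_ae_map measurable_snd.aemeasurable hq
  rw [lintegral_map (continuous_infEDist.measurable.pow_const 2) measurable_fst]
  refine lintegral_mono_ae (hS.mono fun z hz => ?_)
  gcongr
  exact (infEDist_le_edist_of_mem hz).trans_eq (edist_eq_enorm_sub _ _)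

theorem transportCost_map_eq_lintegral_infEDist_sq {T : E → E} (hT : Measurable T)
    (hS : MeasurableSet S) (hTS : ∀ x, T x ∈ S) (hnearest : ∀ x, edist x (T x) = infEDist x S) :
    transportCost p (p.map T) = ∫⁻ x, infEDist x S ^ 2 ∂p := by
  refine le_antisymm ?_ (lintegral_infEDist_sq_le_transportCost
    ((ae_map_iff hT.aemeasurable hS).2 (ae_of_all _ hTS)))
  have hpair : Measurable fun x => (x, T x) := measurable_id.prodMk hT
  have hfst : (p.map fun x => (x, T x)).map Prod.fst = p := by
    rw [Measure.map_map measurable_fst hpair]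
    exact Measure.map_id
  have hsnd : (p.map fun x => (x, T x)).map Prod.snd = p.map T := by
    rw [Measure.map_map measurable_snd hpair]
    rfl
  calc transportCost p (p.map T) ≤ ∫⁻ z, (‖z.1 - z.2‖₊ : ℝ≥0∞) ^ 2 ∂(p.map fun x => (x, T x)) :=
        transportCost_le_of_coupling hfst hsnd
    _ ≤ ∫⁻ x, (‖x - T x‖₊ : ℝ≥0∞) ^ 2 ∂p := lintegral_map_le _ _
    _ ≤ ∫⁻ x, infEDist x S ^ 2 ∂p := lintegral_mono fun x => by
        gcongr
        exact (edist_eq_enorm_sub _ _).symm.trans_le (hnearest x).le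

end NearestPoint

lemma MeasureTheory.Measure.map_ite_const {α β : Type*} [MeasurableSpace α] [MeasurableSpace β]
    (μ : Measure α) {P : α → Prop} [DecidablePred P] (hP : MeasurableSet {x | P x}) (b c : β) :
    μ.map (fun x => if P x then b else c) =
      μ {x | P x} • Measure.dirac b + μ {x | ¬P x} • Measure.dirac c := by
  have hf : Measurable fun x => if P x then b else c :=
    Measurable.ite hP measurable_const measurable_const
  have hb : (μ.restrict {x | P x}).map (fun x => if P x then b else c) =
      (μ.restrict {x | P x}).map fun _ => b :=
    Measure.map_congr (ae_restrict_of_forall_mem hP fun x hx => if_pos hx)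
  have hc : (μ.restrict {x | P x}ᶜ).map (fun x => if P x then b else c) =
      (μ.restrict {x | P x}ᶜ).map fun _ => c :=
    Measure.map_congr (ae_restrict_of_forall_mem hP.compl fun x hx => if_neg hx)
  conv_lhs => rw [← Measure.restrict_add_restrict_compl (μ := μ) hP]
  rw [Measure.map_add _ _ hf, hb, hc, Measure.map_const, Measure.map_const,
    Measure.restrict_apply_univ, Measure.restrict_apply_univ]
  rfl

section SignQuantizer

variable {F : Type*} [NormedAddCommGroup F] [InnerProductSpace ℝ F]

noncomputable def signQuantizer (a x : F) : F := if 0 ≤ ⟪x, a⟫ then a else -a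

lemma norm_sub_le_norm_add_iff_inner_nonneg (x a : F) : ‖x - a‖ ≤ ‖x + a‖ ↔ 0 ≤ ⟪x, a⟫ := by
  rw [← sq_le_sq₀ (norm_nonneg _) (norm_nonneg _), norm_sub_sq_real, norm_add_sq_real]
  constructor <;> intro h <;> linarith

lemma edist_signQuantizer (x a : F) : edist x (signQuantizer a x) = infEDist x {a, -a} := by
  have hle : edist x a ≤ edist x (-a) ↔ 0 ≤ ⟪x, a⟫ := by
    rw [edist_dist, edist_dist, dist_eq_norm, dist_eq_norm, sub_neg_eq_add,
      ENNReal.ofReal_le_ofReal_iff (norm_nonneg _), norm_sub_le_norm_add_iff_inner_nonneg]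
  rw [Set.insert_eq, infEDist_union, infEDist_singleton, infEDist_singleton, signQuantizer]
  split_ifs with h
  · exact (min_eq_left (hle.2 h)).symm
  · exact (min_eq_right (le_of_not_ge (mt hle.1 h))).symm

lemma signQuantizer_mem (a x : F) : signQuantizer a x ∈ ({a, -a} : Set F) := by
  unfold signQuantizer
  split_ifs <;> simp

lemma norm_sub_signQuantizer_sq (x a : F) :
    ‖x - signQuantizer a x‖ ^ 2 = ‖x‖ ^ 2 - 2 * |⟪x, a⟫| + ‖a‖ ^ 2 := by
  unfold signQuantizer
  split_ifs with h
  · rw [norm_sub_sq_real, abs_of_nonneg h]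
  · rw [sub_neg_eq_add, norm_add_sq_real, abs_of_neg (not_le.1 h)]
    ring

variable [MeasurableSpace F] [OpensMeasurableSpace F]

lemma measurableSet_inner_nonneg (a : F) : MeasurableSet {x | 0 ≤ ⟪x, a⟫} :=
  measurableSet_le measurable_const (continuous_id.inner continuous_const).measurable

lemma measurable_signQuantizer (a : F) : Measurable (signQuantizer a) :=
  Measurable.ite (measurableSet_inner_nonneg a) measurable_const measurable_const

lemma map_signQuantizer {μ : Measure F} [IsProbabilityMeasure μ] {a : F}
    (h : μ {x | 0 ≤ ⟪x, a⟫} = 2⁻¹) :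
    μ.map (signQuantizer a) = (2 : ℝ≥0∞)⁻¹ • (Measure.dirac a + Measure.dirac (-a)) := by
  have hc : μ {x | ¬0 ≤ ⟪x, a⟫} = 2⁻¹ := by
    rw [← Set.compl_ofPred, prob_compl_eq_one_sub (measurableSet_inner_nonneg a), h,
      ENNReal.one_sub_inv_two]
  change μ.map (fun x => if 0 ≤ ⟪x, a⟫ then a else -a) = _
  rw [Measure.map_ite_const μ (measurableSet_inner_nonneg a), h, hc, smul_add]

end SignQuantizer

lemma unifIco_apply (a b : ℝ) (s : Set ℝ) (hs : MeasurableSet s) :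
    unifIco a b s = (ENNReal.ofReal (b - a))⁻¹ * volume (s ∩ Set.Ico a b) := by
  rw [unifIco, Measure.smul_apply, Measure.restrict_apply hs, smul_eq_mul]

lemma isProbabilityMeasure_unifIco {a b : ℝ} (hab : a < b) : IsProbabilityMeasure (unifIco a b) :=
  ⟨by rw [unifIco_apply a b _ MeasurableSet.univ, Set.univ_inter, Real.volume_Ico,
    ENNReal.inv_mul_cancel (ENNReal.ofReal_pos.2 (sub_pos.2 hab)).ne' ENNReal.ofReal_ne_top]⟩

lemma lintegral_unifIco_ofReal {a b : ℝ} (hab : a < b) {g : ℝ → ℝ} (hg : Continuous g)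
    (hg₀ : ∀ x, 0 ≤ g x) :
    ∫⁻ x, ENNReal.ofReal (g x) ∂unifIco a b = ENNReal.ofReal ((b - a)⁻¹ * ∫ x in a..b, g x) := by
  rw [unifIco, lintegral_smul_measure, ← ofReal_integral_eq_lintegral_ofReal
      ((hg.integrableOn_Icc).mono_set Set.Ico_subset_Icc_self) (.of_forall hg₀),
    integral_Ico_eq_integral_Ioc, ← intervalIntegral.integral_of_le hab.le,
    ENNReal.ofReal_mul (inv_nonneg.2 (sub_pos.2 hab).le), ENNReal.ofReal_inv_of_pos (sub_pos.2 hab),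
    smul_eq_mul]

lemma Function.Periodic.map_unifIco_eq {T : ℝ} (hT : 0 < T) {α : Type*} [MeasurableSpace α]
    {f : ℝ → α} (hf : Function.Periodic f T) (hfm : Measurable f) (s t : ℝ) :
    (unifIco s (s + T)).map f = (unifIco t (t + T)).map f := by
  have : Fact (0 < T) := ⟨hT⟩
  -- both sides are the image of Haar measure on `AddCircle T` under the map `f` descends to
  have hlift : Measurable hf.lift := measurable_from_quotient.2 hfm
  have key : ∀ u : ℝ, (volume.restrict (Set.Ico u (u + T))).map f = volume.map hf.lift := by
    intro u
    rw [Measure.restrict_congr_set Ico_ae_eq_Ioc, ← (AddCircle.measurePreserving_mk T u).map_eq,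
      Measure.map_map hlift AddCircle.measurable_mk']
    rfl
  simp only [unifIco, Measure.map_smul, key, add_sub_cancel_left]

lemma continuous_pt : Continuous pt :=
  (PiLp.continuous_toLp 2 _).comp <| continuous_pi fun i => by
    fin_cases i
    exacts [continuous_cos, continuous_sin]

lemma periodic_pt : Function.Periodic pt (2 * π) := fun θ => by
  simp only [pt, cos_add_two_pi, sin_add_two_pi]

lemma norm_pt (θ : ℝ) : ‖pt θ‖ = 1 := by
  simp [pt, EuclideanSpace.norm_eq, Fin.sum_univ_two]

lemma inner_pt (θ c : ℝ) : ⟪pt θ, (WithLp.equiv 2 (Fin 2 → ℝ)).symm ![c, 0]⟫ = c * cos θ := by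
  simp [pt, EuclideanSpace.inner_eq_star_dotProduct, Fin.sum_univ_two, dotProduct]

lemma integral_abs_cos_period : ∫ θ in -(π / 2)..-(π / 2) + 2 * π, |cos θ| = 4 := by
  have hint : ∀ a b : ℝ, IntervalIntegrable (fun θ => |cos θ|) volume a b :=
    fun _ _ => continuous_cos.abs.intervalIntegrable _ _
  have hpos : ∫ θ in -(π / 2)..π / 2, |cos θ| = 2 := by
    rw [intervalIntegral.integral_congr (g := cos) fun θ hθ => abs_of_nonneg
      (cos_nonneg_of_mem_Icc (by rwa [Set.uIcc_of_le (by linarith [pi_pos])] at hθ)),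
      integral_cos, sin_pi_div_two, sin_neg, sin_pi_div_two]
    norm_num
  have hneg : ∫ θ in π / 2..-(π / 2) + 2 * π, |cos θ| = 2 := by
    rw [intervalIntegral.integral_congr (g := fun θ => -cos θ) fun θ hθ => ?_]
    · rw [intervalIntegral.integral_neg, integral_cos, sin_add_two_pi, sin_neg, sin_pi_div_two]
      norm_num
    · rw [Set.uIcc_of_le (by linarith [pi_pos])] at hθ
      refine abs_of_nonpos ?_
      rw [← neg_nonneg, ← cos_sub_pi]
      exact cos_nonneg_of_mem_Icc ⟨by linarith [hθ.1], by linarith [hθ.2]⟩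
  rw [← intervalIntegral.integral_add_adjacent_intervals (hint _ (π / 2)) (hint _ _), hpos, hneg]
  norm_num

lemma circUnif_eq_map_unifIco (t : ℝ) : circUnif = (unifIco t (t + 2 * π)).map pt := by
  rw [circUnif, ← periodic_pt.map_unifIco_eq two_pi_pos continuous_pt.measurable 0 t, zero_add]

instance : IsProbabilityMeasure circUnif :=
  have := isProbabilityMeasure_unifIco two_pi_pos
  Measure.isProbabilityMeasure_map continuous_pt.measurable.aemeasurable

lemma circUnif_setOf_inner_nonneg {c : ℝ} (hc : 0 < c) :
    circUnif {x | 0 ≤ ⟪x, (WithLp.equiv 2 (Fin 2 → ℝ)).symm ![c, 0]⟫} = 2⁻¹ := by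
  have hpre : pt ⁻¹' {x | 0 ≤ ⟪x, (WithLp.equiv 2 (Fin 2 → ℝ)).symm ![c, 0]⟫} =
      {θ | 0 ≤ cos θ} := by
    ext θ
    simp only [Set.mem_preimage, Set.mem_ofPred_eq, inner_pt, mul_nonneg_iff_of_pos_left hc]
  have hhalf : {θ | 0 ≤ cos θ} ∩ Set.Ico (-(π / 2)) (-(π / 2) + 2 * π) =
      Set.Icc (-(π / 2)) (π / 2) := by
    ext θ
    simp only [Set.mem_inter_iff, Set.mem_ofPred_eq, Set.mem_Ico, Set.mem_Icc]
    constructor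
    · rintro ⟨hcos, hlo, hhi⟩
      refine ⟨hlo, not_lt.1 fun h => hcos.not_gt (cos_neg_of_pi_div_two_lt_of_lt h (by linarith))⟩
    · rintro ⟨hlo, hhi⟩
      exact ⟨cos_nonneg_of_mem_Icc ⟨hlo, hhi⟩, hlo, by linarith [pi_pos]⟩
  rw [circUnif_eq_map_unifIco (-(π / 2)),
    Measure.map_apply continuous_pt.measurable (measurableSet_inner_nonneg _), hpre,
    unifIco_apply _ _ _ (measurableSet_le measurable_const continuous_cos.measurable), hhalf,
    Real.volume_Icc, ← ENNReal.ofReal_inv_of_pos (by linarith [pi_pos]),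
    ← ENNReal.ofReal_mul (inv_nonneg.2 (by linarith [pi_pos]))]
  have : (-(π / 2) + 2 * π - -(π / 2))⁻¹ * (π / 2 - -(π / 2)) = 2⁻¹ := by
    field_simp; ring
  rw [this, ENNReal.ofReal_inv_of_pos two_pos, ENNReal.ofReal_ofNat]

lemma lintegral_circUnif_infEDist_sq (c : ℝ) :
    ∫⁻ x, infEDist x {(WithLp.equiv 2 (Fin 2 → ℝ)).symm ![c, 0],
      -(WithLp.equiv 2 (Fin 2 → ℝ)).symm ![c, 0]} ^ 2 ∂circUnif =
      ENNReal.ofReal (1 - 4 * |c| / π + c ^ 2) := by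
  set e := (WithLp.equiv 2 (Fin 2 → ℝ)).symm ![c, 0]
  have he : ‖e‖ ^ 2 = c ^ 2 := by simp [e, EuclideanSpace.norm_sq_eq]
  have hdist : ∀ θ, infEDist (pt θ) {e, -e} ^ 2 =
      ENNReal.ofReal (1 - 2 * |c| * |cos θ| + c ^ 2) := fun θ => by
    rw [← edist_signQuantizer, edist_dist, dist_eq_norm, ← ENNReal.ofReal_pow (norm_nonneg _),
      norm_sub_signQuantizer_sq, norm_pt, inner_pt, he, abs_mul]
    ring_nf
  have hnonneg : ∀ θ, 0 ≤ 1 - 2 * |c| * |cos θ| + c ^ 2 := fun θ => by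
    nlinarith [abs_cos_le_one θ, abs_nonneg c, sq_abs c, sq_nonneg (1 - |c|)]
  rw [circUnif_eq_map_unifIco (-(π / 2)),
    lintegral_map (continuous_infEDist.measurable.pow_const 2) continuous_pt.measurable]
  simp_rw [hdist]
  rw [lintegral_unifIco_ofReal (by linarith [pi_pos]) (by fun_prop) hnonneg,
    intervalIntegral.integral_add (Continuous.intervalIntegrable (by fun_prop) _ _)
      intervalIntegrable_const,
    intervalIntegral.integral_sub intervalIntegrable_const
      (Continuous.intervalIntegrable (by fun_prop) _ _),
    intervalIntegral.integral_const_mul, integral_abs_cos_period]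
  congr 1
  simp only [intervalIntegral.integral_const, smul_eq_mul, add_sub_cancel_left]
  field_simp

theorem stmt5 :
    W2sq circUnif
      ((2 : ENNReal)⁻¹ •
        (Measure.dirac ((WithLp.equiv 2 (Fin 2 → ℝ)).symm ![2 / π, 0]) +
         Measure.dirac ((WithLp.equiv 2 (Fin 2 → ℝ)).symm ![-(2 / π), 0]))) =
      1 - 4 / π ^ 2 := by
  set a := (WithLp.equiv 2 (Fin 2 → ℝ)).symm ![2 / π, 0]
  have hneg : (WithLp.equiv 2 (Fin 2 → ℝ)).symm ![-(2 / π), 0] = -a := by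
    ext i; fin_cases i <;> simp [a]
  have hpi : 0 < 2 / π := div_pos two_pos pi_pos
  have hcost : 1 - 4 * |2 / π| / π + (2 / π) ^ 2 = 1 - 4 / π ^ 2 := by
    rw [abs_of_pos hpi]; field_simp; ring
  rw [hneg, ← map_signQuantizer (circUnif_setOf_inner_nonneg hpi), W2sq_eq_toReal_transportCost,
    transportCost_map_eq_lintegral_infEDist_sq (measurable_signQuantizer a)
      (Set.toFinite _).measurableSet (signQuantizer_mem a) (edist_signQuantizer · a),
    lintegral_circUnif_infEDist_sq, hcost, ENNReal.toReal_ofReal]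
  rw [sub_nonneg, div_le_one (by positivity)]
  nlinarith [pi_gt_three]
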